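/- arXiv:1304.5024 — 3 statements merged into one kernel-verified Lean document; each statement's English description precedes it below -/
import Mathlib

section
/- The map Φ : 𝔤^k → G_k(𝔤) defined by Φ(x_1, …, x_k)_α = x_{|α|} (for α ∈ I_k^*, where |α| is the cardinality of α) is an injective homomorphism from J_k(𝔤) to G_k(𝔤) with respect to the multiplications defined in the context, i.e. Φ(x·y) = Φ(x)·Φ(y) for all x, y ∈ 𝔤^k, and its image is exactly the set of families (x_α)_{α ∈ I_k^*} with x_α = x_β whenever |α| = |β| (equivalently, the fixed point set of the action of the symmetric group S_k permuting the index subsets). In particular this fixed point set is a subgroup of G_k(𝔤) isomorphic to J_k(𝔤). -/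
/-- `Ncoef [i₁, …, i_ℓ] = C(i₁+⋯+i_ℓ−1, i_ℓ−1) ⋯ C(i₁+i₂−1, i₂−1)`,
with the empty product (ℓ ≤ 1) equal to 1. -/
def Ncoef : List ℕ → ℕ
  | [] => 1
  | [_] => 1
  | i :: j :: rest => Nat.choose (i + j - 1) (j - 1) * Ncoef ((i + j) :: rest)
termination_by l => l.length

/-- A list `L = (λ₁, …, λ_ℓ)` of pairwise disjoint nonempty finite subsets of `ℕ`
whose union is `S` is an *anti-lexicographically ordered partition* of `S` if for
every `r` the maximum of `λ₁ ∪ ⋯ ∪ λ_r` belongs to `λ_r`. -/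
def IsALOP (S : Finset ℕ) (L : List (Finset ℕ)) : Prop :=
  (∀ B ∈ L, B.Nonempty) ∧ List.Pairwise Disjoint L ∧
    L.foldr (· ∪ ·) ∅ = S ∧
    ∀ r, (hr : r < L.length) → ∃ m ∈ L.get ⟨r, hr⟩,
      ∀ a ∈ (L.take (r + 1)).foldr (· ∪ ·) ∅, a ≤ m

section Defs

variable {R : Type*} [CommRing R] {𝔤 : Type*} [LieRing 𝔤] [LieAlgebra R 𝔤]

/-- Extend a `k`-tuple `(x_1, …, x_k)` (with slot `n` stored at index `n-1`) to a
function on `ℕ`, by `0` outside `{1, …, k}`. -/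
def extX (k : ℕ) (x : Fin k → 𝔤) : ℕ → 𝔤 :=
  fun n => if h : 1 ≤ n ∧ n ≤ k then x ⟨n - 1, by omega⟩ else 0

/-- The `n`-th component of the product on `J_k(𝔤)`:
`z_n = x_n + Σ_{ℓ} Σ_{i₁+⋯+i_ℓ=n} N_{(i₁,…,i_ℓ)} ad_{x_{i_{ℓ−1}}} ⋯ ad_{x_{i₁}} y_{i_ℓ}`. -/
def jetZ (x y : ℕ → 𝔤) (n : ℕ) : 𝔤 :=
  x n + ∑ c : Composition n,
    Ncoef c.blocks •
      (c.blocks.dropLast.foldl (fun v i => ⁅x i, v⁆) (y (c.blocks.getLast?.getD 0)))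

/-- The multiplication on `J_k(𝔤) = 𝔤^k`. -/
def jMul (k : ℕ) (x y : Fin k → 𝔤) : Fin k → 𝔤 :=
  fun j => jetZ (extX k x) (extX k y) (j.val + 1)

/-- The index set `I_k^*` of nonempty subsets of `{1, …, k}`. -/
def Ik (k : ℕ) : Type :=
  {α : Finset ℕ // α ⊆ Finset.Icc 1 k ∧ α.Nonempty}

/-- Extend a family indexed by `I_k^*` to all finite subsets of `ℕ`, by `0`. -/
def extF (k : ℕ) (x : Ik k → 𝔤) : Finset ℕ → 𝔤 :=
  fun α => if h : α ⊆ Finset.Icc 1 k ∧ α.Nonempty then x ⟨α, h⟩ else 0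

/-- The `α`-component of the product on `G_k(𝔤)` :
`x_α + Σ_λ ad_{x_{λ_{ℓ−1}}} ⋯ ad_{x_{λ₁}} y_{λ_ℓ}`, summed over all
anti-lexicographically ordered partitions `λ` of `α`. -/
noncomputable def tanZ (x y : Finset ℕ → 𝔤) (α : Finset ℕ) : 𝔤 :=
  x α + ∑ᶠ (L : List (Finset ℕ)) (_ : IsALOP α L),
    L.dropLast.foldl (fun v B => ⁅x B, v⁆) (y (L.getLast?.getD ∅))

/-- The multiplication on `G_k(𝔤)`. -/
noncomputable def tanMul (k : ℕ) (x y : Ik k → 𝔤) : Ik k → 𝔤 :=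
  fun α => tanZ (extF k x) (extF k y) α.1

/-- The map `Φ : J_k(𝔤) → G_k(𝔤)`, `Φ(x₁, …, x_k)_α = x_{|α|}`. -/
def Phi (k : ℕ) (x : Fin k → 𝔤) : Ik k → 𝔤 :=
  fun α => extX k x α.1.card

end Defs

/-!
Both products are sums of iterated brackets, so the point is to compare the index sets. In an
anti-lexicographically ordered partition `(λ₁, …, λ_ℓ)` of `α` the last block is exactly a subset
of `α` containing `max α`, and `(λ₁, …, λ_{ℓ-1})` is an arbitrary such partition of the rest.
Of the subsets of `α` of size `i` containing `max α` there are `C(|α| - 1, i - 1)`, so by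
induction the partitions of `α` whose block sizes form the composition `(i₁, …, i_ℓ)` of `|α|`
number exactly `N_{(i₁, …, i_ℓ)}`. For a family that depends only on cardinalities, each
partition contributes the term of its composition, and the `G_k` product collapses to the
`J_k` product.
-/

open Finset

lemma Ncoef_concat (l : List ℕ) (i : ℕ) :
    Ncoef (l ++ [i]) = (l.sum + i - 1).choose (i - 1) * Ncoef l := by
  induction l using Ncoef.induct with
  | case1 => simp [Ncoef]
  | case2 a => simp [Ncoef]
  | case3 a b rest ih =>
    change Ncoef (a :: b :: (rest ++ [i])) = _
    rw [Ncoef, ← List.cons_append, ih, Ncoef]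
    simp only [List.sum_cons, add_assoc, mul_left_comm]

section Compositions

noncomputable def compositionBlocks (n : ℕ) : Finset (List ℕ) :=
  univ.image (Composition.blocks : Composition n → List ℕ)

lemma mem_compositionBlocks {n : ℕ} {l : List ℕ} :
    l ∈ compositionBlocks n ↔ (∀ i ∈ l, 0 < i) ∧ l.sum = n := by
  simp only [compositionBlocks, mem_image, mem_univ, true_and]
  constructor
  · rintro ⟨c, rfl⟩
    exact ⟨fun i hi => c.blocks_pos hi, c.blocks_sum⟩
  · rintro ⟨hpos, hsum⟩
    exact ⟨⟨l, hpos _, hsum⟩, rfl⟩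

lemma sum_composition_eq_sum_compositionBlocks {M : Type*} [AddCommMonoid M] (n : ℕ)
    (f : List ℕ → M) : ∑ c : Composition n, f c.blocks = ∑ l ∈ compositionBlocks n, f l :=
  (sum_image fun _ _ _ _ h => Composition.ext h).symm

lemma compositionBlocks_zero : compositionBlocks 0 = {[]} := by
  ext l
  rw [mem_compositionBlocks, mem_singleton]
  constructor
  · rintro ⟨hpos, hsum⟩
    exact List.eq_nil_iff_forall_not_mem.2 fun i hi =>
      (hpos i hi).ne' (List.sum_eq_zero_iff.1 hsum i hi)
  · rintro rfl
    simp

lemma compositionBlocks_eq_image_concat {n : ℕ} (hn : 1 ≤ n) :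
    compositionBlocks n =
      ((Icc 1 n).sigma fun i => compositionBlocks (n - i)).image fun p => p.2 ++ [p.1] := by
  ext l
  simp only [mem_image, mem_sigma, mem_Icc, mem_compositionBlocks, Sigma.exists]
  constructor
  · rintro ⟨hpos, rfl⟩
    rcases List.eq_nil_or_concat' l with rfl | ⟨l', i, rfl⟩
    · simp at hn
    · simp only [List.mem_append, List.mem_singleton, List.sum_append, List.sum_singleton]
        at hpos ⊢
      have hi := hpos i (Or.inr rfl)
      exact ⟨i, l', ⟨⟨hi, by omega⟩, fun j hj => hpos j (Or.inl hj), by omega⟩, rfl⟩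
  · rintro ⟨i, l', ⟨⟨hi, hin⟩, hpos, hsum⟩, rfl⟩
    simp only [List.mem_append, List.mem_singleton, List.sum_append, List.sum_singleton]
    exact ⟨fun j hj => hj.elim (hpos j) (· ▸ hi), by omega⟩

lemma sum_compositionBlocks_eq_sum_concat {M : Type*} [AddCommMonoid M] {n : ℕ} (hn : 1 ≤ n)
    (f : List ℕ → M) :
    ∑ l ∈ compositionBlocks n, f l =
      ∑ i ∈ Icc 1 n, ∑ l ∈ compositionBlocks (n - i), f (l ++ [i]) := by
  rw [compositionBlocks_eq_image_concat hn, sum_image, sum_sigma]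
  rintro ⟨i, l⟩ - ⟨j, l'⟩ - h
  obtain ⟨rfl, h⟩ := List.append_inj' h rfl
  simp_all

end Compositions

section Partitions

lemma mem_foldr_union {ι : Type*} [DecidableEq ι] {L : List (Finset ι)} {a : ι} :
    a ∈ L.foldr (· ∪ ·) ∅ ↔ ∃ B ∈ L, a ∈ B := by
  induction L <;> simp [*]

lemma foldr_union_concat {ι : Type*} [DecidableEq ι] (L : List (Finset ι)) (B : Finset ι) :
    (L ++ [B]).foldr (· ∪ ·) ∅ = L.foldr (· ∪ ·) ∅ ∪ B := by
  ext a
  simp only [mem_foldr_union, mem_union, List.mem_append, List.mem_singleton]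
  constructor
  · rintro ⟨C, hC | rfl, ha⟩
    exacts [Or.inl ⟨C, hC, ha⟩, Or.inr ha]
  · rintro (⟨C, hC, ha⟩ | ha)
    exacts [⟨C, Or.inl hC, ha⟩, ⟨B, Or.inr rfl, ha⟩]

def PrefixMaxInLast (L : List (Finset ℕ)) : Prop :=
  ∀ r, (hr : r < L.length) → ∃ m ∈ L.get ⟨r, hr⟩,
    ∀ a ∈ (L.take (r + 1)).foldr (· ∪ ·) ∅, a ≤ m

lemma isALOP_iff {S : Finset ℕ} {L : List (Finset ℕ)} :
    IsALOP S L ↔ (∀ B ∈ L, B.Nonempty) ∧ L.Pairwise Disjoint ∧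
      L.foldr (· ∪ ·) ∅ = S ∧ PrefixMaxInLast L :=
  Iff.rfl

lemma prefixMaxInLast_concat_iff (L : List (Finset ℕ)) (B : Finset ℕ) :
    PrefixMaxInLast (L ++ [B]) ↔
      PrefixMaxInLast L ∧ ∃ m ∈ B, ∀ a ∈ L.foldr (· ∪ ·) ∅ ∪ B, a ≤ m := by
  simp only [PrefixMaxInLast, List.length_append, List.length_singleton, List.get_eq_getElem]
  have htake : (L ++ [B]).take (L.length + 1) = L ++ [B] := List.take_of_length_le (by simp)
  constructor
  · intro h
    refine ⟨fun r hr => ?_, ?_⟩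
    · simpa [List.getElem_append_left hr, List.take_append_of_le_length hr] using
        h r (by omega)
    · simpa only [htake, foldr_union_concat, List.getElem_concat_length] using h L.length (by omega)
  · rintro ⟨h, hlast⟩ r hr
    rcases lt_or_eq_of_le (Nat.le_of_lt_succ hr) with hr | rfl
    · simpa [List.getElem_append_left hr, List.take_append_of_le_length hr] using h r hr
    · simpa only [htake, foldr_union_concat, List.getElem_concat_length] using hlast

lemma exists_mem_forall_le_iff_max'_mem {ι : Type*} [LinearOrder ι] {α B : Finset ι}
    (hα : α.Nonempty) (hB : B ⊆ α) :
    (∃ m ∈ B, ∀ a ∈ α, a ≤ m) ↔ α.max' hα ∈ B := by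
  constructor
  · rintro ⟨m, hm, hle⟩
    rwa [le_antisymm (le_max' α m (hB hm)) (hle _ (max'_mem α hα))] at hm
  · exact fun h => ⟨_, h, fun a ha => le_max' α a ha⟩

lemma isALOP_empty_iff (L : List (Finset ℕ)) : IsALOP ∅ L ↔ L = [] := by
  constructor
  · rintro ⟨hne, -, hunion, -⟩
    refine List.eq_nil_iff_forall_not_mem.2 fun B hB => ?_
    obtain ⟨a, ha⟩ := hne B hB
    simpa [hunion] using mem_foldr_union.2 ⟨B, hB, ha⟩
  · rintro rfl
    exact ⟨by simp, by simp, rfl, fun r hr => by simp at hr⟩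

lemma IsALOP.ne_nil {α : Finset ℕ} {L : List (Finset ℕ)} (h : IsALOP α L) (hα : α.Nonempty) :
    L ≠ [] := by
  rintro rfl
  exact hα.ne_empty h.2.2.1.symm

lemma isALOP_concat_iff {α : Finset ℕ} (hα : α.Nonempty) (L : List (Finset ℕ))
    (B : Finset ℕ) :
    IsALOP α (L ++ [B]) ↔ B ⊆ α ∧ α.max' hα ∈ B ∧ IsALOP (α \ B) L := by
  simp only [isALOP_iff, prefixMaxInLast_concat_iff, foldr_union_concat,
    List.forall_mem_append, List.pairwise_append,
    List.pairwise_singleton, List.mem_singleton, forall_eq, true_and]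
  constructor
  · rintro ⟨⟨hne, hB⟩, ⟨hpw, hdisj⟩, hunion, hpre, hmax⟩
    have hBα : B ⊆ α := hunion ▸ subset_union_right
    have hdisj' : Disjoint (L.foldr (· ∪ ·) ∅) B := disjoint_left.2 fun a ha haB => by
      obtain ⟨C, hC, haC⟩ := mem_foldr_union.1 ha
      exact disjoint_left.1 (hdisj C hC) haC haB
    refine ⟨hBα, (exists_mem_forall_le_iff_max'_mem hα hBα).1 (hunion ▸ hmax),
      hne, hpw, ?_, hpre⟩
    rw [← hunion, union_sdiff_cancel_right hdisj']
  · rintro ⟨hBα, hmax, hne, hpw, hunion, hpre⟩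
    refine ⟨⟨hne, ⟨_, hmax⟩⟩, ⟨hpw, fun C hC => ?_⟩, ?_, hpre, ?_⟩
    · have hC' : C ⊆ α \ B := hunion ▸ fun a ha => mem_foldr_union.2 ⟨C, hC, ha⟩
      exact disjoint_of_subset_left hC' sdiff_disjoint
    · rw [hunion, sdiff_union_of_subset hBα]
    · rw [hunion, sdiff_union_of_subset hBα]
      exact (exists_mem_forall_le_iff_max'_mem hα hBα).2 hmax

lemma IsALOP.subset_of_mem {α B : Finset ℕ} {L : List (Finset ℕ)} (h : IsALOP α L) (hB : B ∈ L) :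
    B ⊆ α :=
  h.2.2.1 ▸ fun _ ha => mem_foldr_union.2 ⟨B, hB, ha⟩

lemma IsALOP.getLast?_getD_subset {α : Finset ℕ} {L : List (Finset ℕ)} (h : IsALOP α L) :
    L.getLast?.getD ∅ ⊆ α := by
  cases hL : L.getLast? with
  | none => exact empty_subset α
  | some B => exact h.subset_of_mem (List.mem_of_getLast? hL)

end Partitions

section Counting

noncomputable def lastBlocks (α : Finset ℕ) (hα : α.Nonempty) : Finset (Finset ℕ) :=
  α.powerset.filter (α.max' hα ∈ ·)

lemma mem_lastBlocks {α B : Finset ℕ} {hα : α.Nonempty} :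
    B ∈ lastBlocks α hα ↔ B ⊆ α ∧ α.max' hα ∈ B := by
  rw [lastBlocks, mem_filter, mem_powerset]

lemma sdiff_ssubset_of_mem_lastBlocks {α B : Finset ℕ} {hα : α.Nonempty}
    (hB : B ∈ lastBlocks α hα) : α \ B ⊂ α :=
  sdiff_ssubset (mem_lastBlocks.1 hB).1 ⟨_, (mem_lastBlocks.1 hB).2⟩

noncomputable def alops (α : Finset ℕ) : Finset (List (Finset ℕ)) :=
  if hα : α.Nonempty then
    (lastBlocks α hα).attach.biUnion fun B => (alops (α \ B.1)).image (· ++ [B.1])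
  else {[]}
termination_by α.card
decreasing_by exact card_lt_card (sdiff_ssubset_of_mem_lastBlocks B.2)

lemma mem_alops {α : Finset ℕ} {L : List (Finset ℕ)} : L ∈ alops α ↔ IsALOP α L := by
  induction α using Finset.strongInductionOn generalizing L with
  | _ α ih =>
  by_cases hα : α.Nonempty
  · rw [alops, dif_pos hα]
    simp only [mem_biUnion, mem_attach, mem_image, true_and, Subtype.exists]
    constructor
    · rintro ⟨B, hB, L', hL', rfl⟩
      rw [isALOP_concat_iff hα, ← and_assoc, ← mem_lastBlocks,
        ← ih _ (sdiff_ssubset_of_mem_lastBlocks hB)]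
      exact ⟨hB, hL'⟩
    · intro hL
      obtain ⟨L', B, rfl⟩ := (List.eq_nil_or_concat' L).resolve_left (hL.ne_nil hα)
      rw [isALOP_concat_iff hα, ← and_assoc, ← mem_lastBlocks] at hL
      exact ⟨B, hL.1, L', (ih _ (sdiff_ssubset_of_mem_lastBlocks hL.1)).2 hL.2, rfl⟩
  · rw [not_nonempty_iff_eq_empty] at hα
    subst hα
    rw [alops, dif_neg (by simp), mem_singleton, isALOP_empty_iff]

lemma finsum_isALOP_eq_sum_alops {M : Type*} [AddCommMonoid M] (α : Finset ℕ)
    (F : List (Finset ℕ) → M) : ∑ᶠ (L) (_ : IsALOP α L), F L = ∑ L ∈ alops α, F L := by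
  rw [← finsum_mem_coe_finset]
  simp only [mem_coe, mem_alops]

lemma sum_alops_eq_sum_lastBlocks {M : Type*} [AddCommMonoid M] {α : Finset ℕ}
    (hα : α.Nonempty) (F : List (Finset ℕ) → M) :
    ∑ L ∈ alops α, F L = ∑ B ∈ lastBlocks α hα, ∑ L ∈ alops (α \ B), F (L ++ [B]) := by
  rw [alops, dif_pos hα, sum_biUnion, ← sum_attach (lastBlocks α hα)]
  · refine sum_congr rfl fun B _ => sum_image fun L _ L' _ h => ?_
    exact (List.append_inj' h rfl).1
  · intro B _ B' _ hne
    refine disjoint_left.2 fun L hL hL' => hne ?_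
    obtain ⟨L₁, -, rfl⟩ := mem_image.1 hL
    obtain ⟨L₂, -, h⟩ := mem_image.1 hL'
    simpa using (List.append_inj' h rfl).2.symm

lemma card_filter_lastBlocks_card_eq {α : Finset ℕ} (hα : α.Nonempty) {i : ℕ} (hi : 1 ≤ i) :
    ((lastBlocks α hα).filter (·.card = i)).card = (α.card - 1).choose (i - 1) := by
  set m := α.max' hα
  have hm : m ∈ α := α.max'_mem hα
  rw [← card_erase_of_mem hm, ← card_powersetCard (i - 1) (α.erase m)]
  refine card_nbij' (·.erase m) (insert m) ?_ ?_ ?_ ?_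
  · intro B hB
    simp only [mem_coe, mem_filter, mem_lastBlocks] at hB
    simp only [mem_coe, mem_powersetCard]
    exact ⟨erase_subset_erase _ hB.1.1, by rw [card_erase_of_mem hB.1.2, hB.2]⟩
  · intro s hs
    simp only [mem_coe, mem_powersetCard, subset_erase] at hs
    simp only [mem_coe, mem_filter, mem_lastBlocks]
    refine ⟨⟨insert_subset hm hs.1.1, mem_insert_self _ _⟩, ?_⟩
    rw [card_insert_of_notMem hs.1.2, hs.2]
    omega
  · intro B hB
    simp only [mem_coe, mem_filter, mem_lastBlocks] at hB
    exact insert_erase hB.1.2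
  · intro s hs
    simp only [mem_coe, mem_powersetCard, subset_erase] at hs
    exact erase_insert hs.1.2

lemma sum_alops_map_card {M : Type*} [AddCommMonoid M] (α : Finset ℕ) (H : List ℕ → M) :
    ∑ L ∈ alops α, H (L.map card) = ∑ c ∈ compositionBlocks α.card, Ncoef c • H c := by
  induction α using Finset.strongInductionOn generalizing H with
  | _ α ih =>
  by_cases hα : α.Nonempty
  · set n := α.card
    have hn : 1 ≤ n := card_pos.2 hα
    have hcard : ∀ B ∈ lastBlocks α hα, B.card ∈ Icc 1 n := fun B hB =>
      mem_Icc.2 ⟨card_pos.2 ⟨_, (mem_lastBlocks.1 hB).2⟩, card_le_card (mem_lastBlocks.1 hB).1⟩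
    calc ∑ L ∈ alops α, H (L.map card)
        = ∑ B ∈ lastBlocks α hα, ∑ L ∈ alops (α \ B), H (L.map card ++ [B.card]) := by
          simp only [sum_alops_eq_sum_lastBlocks hα, List.map_append, List.map_singleton]
      _ = ∑ B ∈ lastBlocks α hα,
            ∑ c ∈ compositionBlocks (n - B.card), Ncoef c • H (c ++ [B.card]) := by
          refine sum_congr rfl fun B hB => ?_
          rw [ih _ (sdiff_ssubset_of_mem_lastBlocks hB) (H <| · ++ [B.card]),
            card_sdiff_of_subset (mem_lastBlocks.1 hB).1]
      _ = ∑ i ∈ Icc 1 n, (n - 1).choose (i - 1) •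
            ∑ c ∈ compositionBlocks (n - i), Ncoef c • H (c ++ [i]) := by
          rw [← sum_fiberwise_of_maps_to hcard]
          refine sum_congr rfl fun i hi => ?_
          rw [sum_congr rfl fun B hB => by rw [(mem_filter.1 hB).2], sum_const,
            card_filter_lastBlocks_card_eq hα (mem_Icc.1 hi).1]
      _ = ∑ i ∈ Icc 1 n, ∑ c ∈ compositionBlocks (n - i), Ncoef (c ++ [i]) • H (c ++ [i]) := by
          refine sum_congr rfl fun i hi => ?_
          rw [smul_sum]
          refine sum_congr rfl fun c hc => ?_
          rw [Ncoef_concat, mul_smul, (mem_compositionBlocks.1 hc).2,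
            Nat.sub_add_cancel (mem_Icc.1 hi).2]
      _ = ∑ c ∈ compositionBlocks n, Ncoef c • H c :=
          (sum_compositionBlocks_eq_sum_concat hn fun c => Ncoef c • H c).symm
  · rw [not_nonempty_iff_eq_empty] at hα
    subst hα
    rw [alops, dif_neg (by simp), card_empty, compositionBlocks_zero, sum_singleton,
      sum_singleton, List.map_nil, Ncoef.eq_1, one_smul]

end Counting

theorem tanZ_eq_jetZ_card {𝔤 : Type*} [LieRing 𝔤] {x y : Finset ℕ → 𝔤} {x' y' : ℕ → 𝔤}
    {α : Finset ℕ} (hx : ∀ B ⊆ α, x B = x' B.card) (hy : ∀ B ⊆ α, y B = y' B.card) :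
    tanZ x y α = jetZ x' y' α.card := by
  rw [tanZ, jetZ, hx α subset_rfl, finsum_isALOP_eq_sum_alops,
    sum_composition_eq_sum_compositionBlocks α.card fun l =>
      Ncoef l • l.dropLast.foldl (fun v i => ⁅x' i, v⁆) (y' (l.getLast?.getD 0)),
    ← sum_alops_map_card]
  congr 1
  refine sum_congr rfl fun L hL => ?_
  have hL := mem_alops.1 hL
  rw [← List.map_dropLast, List.foldl_map, List.getLast?_map, ← card_empty, Option.getD_map,
    ← hy _ hL.getLast?_getD_subset]
  exact List.foldl_ext _ _ _ fun v B hB =>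
    by rw [hx B (hL.subset_of_mem (List.mem_of_mem_dropLast hB))]

section Jets

variable {𝔤 : Type*} [LieRing 𝔤] {k : ℕ}

lemma Ik.one_le_card (α : Ik k) : 1 ≤ α.1.card :=
  card_pos.2 α.2.2

lemma Ik.card_le (α : Ik k) : α.1.card ≤ k := by
  simpa using card_le_card α.2.1

def Ik.initialSegment (j : Fin k) : Ik k :=
  ⟨Icc 1 (j + 1), Icc_subset_Icc_right j.2, nonempty_Icc.2 (Nat.le_add_left 1 j)⟩

lemma Ik.card_initialSegment (j : Fin k) : (Ik.initialSegment j).1.card = j + 1 :=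
  (Nat.card_Icc 1 (j + 1)).trans (Nat.add_sub_cancel _ _)

lemma Phi_apply (x : Fin k → 𝔤) (α : Ik k) :
    Phi k x α = x ⟨α.1.card - 1, by have := α.one_le_card; have := α.card_le; omega⟩ :=
  dif_pos ⟨α.one_le_card, α.card_le⟩

lemma Phi_initialSegment (x : Fin k → 𝔤) (j : Fin k) : Phi k x (Ik.initialSegment j) = x j := by
  rw [Phi_apply]
  congr 1
  ext
  simp only [Ik.card_initialSegment, Nat.add_sub_cancel]

lemma extF_Phi (x : Fin k → 𝔤) {B : Finset ℕ} (hB : B ⊆ Icc 1 k) :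
    extF k (Phi k x) B = extX k x B.card := by
  rcases B.eq_empty_or_nonempty with rfl | hne
  · have hF : extF k (Phi k x) ∅ = 0 := dif_neg fun h => Finset.not_nonempty_empty h.2
    have hX : extX k x 0 = 0 := dif_neg fun h => Nat.not_succ_le_zero 0 h.1
    rw [hF, card_empty, hX]
  · exact dif_pos ⟨hB, hne⟩

lemma Phi_jMul (x y : Fin k → 𝔤) : Phi k (jMul k x y) = tanMul k (Phi k x) (Phi k y) := by
  funext α
  rw [tanMul, tanZ_eq_jetZ_card (fun B hB => extF_Phi x (hB.trans α.2.1))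
    (fun B hB => extF_Phi y (hB.trans α.2.1)), Phi_apply, jMul]
  congr
  exact Nat.sub_add_cancel α.one_le_card

lemma Phi_injective : Function.Injective (Phi (𝔤 := 𝔤) k) := fun x y h =>
  funext fun j => by simpa only [Phi_initialSegment] using congrFun h (Ik.initialSegment j)

lemma range_Phi : Set.range (Phi (𝔤 := 𝔤) k) =
    {f : Ik k → 𝔤 | ∀ α β : Ik k, α.1.card = β.1.card → f α = f β} := by
  ext f
  constructor
  · rintro ⟨x, rfl⟩ α β h
    simp only [Phi, h]
  · intro hf
    refine ⟨fun j => f (Ik.initialSegment j), funext fun α => ?_⟩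
    rw [Phi_apply]
    refine hf _ _ ?_
    rw [Ik.card_initialSegment, Nat.sub_add_cancel α.one_le_card]

end Jets

theorem stmt6_general {𝔤 : Type*} [LieRing 𝔤]
    (k : ℕ) :
    Function.Injective (Phi (𝔤 := 𝔤) k) ∧
    (∀ x y : Fin k → 𝔤, Phi k (jMul k x y) = tanMul k (Phi k x) (Phi k y)) ∧
    Set.range (Phi (𝔤 := 𝔤) k)
      = {f : Ik k → 𝔤 | ∀ α β : Ik k, α.1.card = β.1.card → f α = f β} :=
  ⟨Phi_injective, Phi_jMul, range_Phi⟩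

/-- `Φ(x)_α = x_{|α|}` is an injective group homomorphism from
`J_k(𝔤)` to `G_k(𝔤)` whose image is exactly the set of families constant on
cardinalities (the fixed point set of the `S_k`-action). -/
theorem stmt6 {R : Type*} [CommRing R] {𝔤 : Type*} [LieRing 𝔤] [LieAlgebra R 𝔤]
    (k : ℕ) (hk : 1 ≤ k) :
    Function.Injective (Phi (𝔤 := 𝔤) k) ∧
    (∀ x y : Fin k → 𝔤, Phi k (jMul k x y) = tanMul k (Phi k x) (Phi k y)) ∧
    Set.range (Phi (𝔤 := 𝔤) k)
      = {f : Ik k → 𝔤 | ∀ α β : Ik k, α.1.card = β.1.card → f α = f β} :=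
  stmt6_general k
end

section
/- In J_k(𝔤), let 1 ≤ i < j ≤ k and x, y ∈ 𝔤, let a ∈ 𝔤^k be the pure element with x in slot i and 0 elsewhere, and let b be the pure element with y in slot j and 0 elsewhere. Then the product a·b has component x in slot i, component ((m·i + j − 1)! / (m! · (i!)^m · (j−1)!)) · ad_x^m y in slot m·i + j for each m ≥ 0 with m·i + j ≤ k (in particular y in slot j), and 0 in every other slot. -/
/-!
Slot `n` of `a·b` is `a_n` plus a sum over the compositions `(i₁, …, i_ℓ)` of `n` of
`N_{(i₁,…,i_ℓ)} ad_{a_{i_{ℓ−1}}} ⋯ ad_{a_{i₁}} b_{i_ℓ}`. Since `a` lives in slot `i` and `b` in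
slot `j`, a summand vanishes unless `i₁ = ⋯ = i_{ℓ−1} = i` and `i_ℓ = j`, so only the composition
`(i, …, i, j)` with `m = (n − j)/i` entries `i` survives, and only when `n = m·i + j`. It
contributes `N • ad_x^m y`, where the binomial product
`N = ∏_{r=2}^{m} C(r·i − 1, i − 1) · C(m·i + j − 1, j − 1)` telescopes to
`(m·i + j − 1)! / (m! · (i!)^m · (j − 1)!)`.
-/

open Nat

lemma Ncoef_singleton (a : ℕ) : Ncoef [a] = 1 := by
  rw [Ncoef]

lemma Ncoef_cons_cons (a b : ℕ) (l : List ℕ) :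
    Ncoef (a :: b :: l) = (a + b - 1).choose (b - 1) * Ncoef ((a + b) :: l) := by
  rw [Ncoef]

lemma Ncoef_zero_cons {l : List ℕ} (hl : l ≠ []) : Ncoef (0 :: l) = Ncoef l := by
  obtain ⟨b, l, rfl⟩ := List.exists_cons_of_ne_nil hl
  rw [Ncoef_cons_cons, zero_add, Nat.choose_self, one_mul]

/-- A head `p * i` stands for `p` blocks `i` already merged by the recursion of `Ncoef`. -/
lemma Ncoef_mul_cons_replicate_append {i j : ℕ} (hi : 1 ≤ i) (hj : 1 ≤ j) (m p : ℕ) :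
    Ncoef (p * i :: (List.replicate m i ++ [j])) * ((p * i)! * i ! ^ m * (j - 1)! * (p + m)!)
      = p ! * ((p + m) * i + j - 1)! := by
  induction m generalizing p with
  | zero =>
    have h := Nat.choose_mul_factorial_mul_factorial (show j - 1 ≤ p * i + j - 1 by omega)
    rw [show p * i + j - 1 - (j - 1) = p * i by omega] at h
    rw [List.replicate_zero, List.nil_append, Ncoef_cons_cons, Ncoef_singleton, add_zero,
      ← h]
    ring
  | succ m ih =>
    have e : (p + 1) * i = p * i + i := by ring
    have hC := Nat.choose_mul_factorial_mul_factorial (show i - 1 ≤ (p + 1) * i - 1 by omega)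
    rw [show (p + 1) * i - 1 - (i - 1) = p * i by omega] at hC
    have hfac : ((p + 1) * i)! = (p + 1) * (((p + 1) * i - 1).choose (i - 1) * (p * i)! * i !) := by
      rw [← Nat.mul_factorial_pred (by omega : i ≠ 0), ← Nat.mul_factorial_pred (by positivity),
        ← hC]
      ring
    rw [List.replicate_succ, List.cons_append, Ncoef_cons_cons, ← e]
    apply Nat.eq_of_mul_eq_mul_left (Nat.succ_pos p)
    calc (p + 1) * (((p + 1) * i - 1).choose (i - 1) *
            Ncoef ((p + 1) * i :: (List.replicate m i ++ [j])) *
            ((p * i)! * i ! ^ (m + 1) * (j - 1)! * (p + (m + 1))!))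
        = Ncoef ((p + 1) * i :: (List.replicate m i ++ [j])) *
            (((p + 1) * i)! * i ! ^ m * (j - 1)! * (p + 1 + m)!) := by
          rw [hfac, show p + (m + 1) = p + 1 + m by ring]
          ring
      _ = (p + 1)! * ((p + 1 + m) * i + j - 1)! := ih (p + 1)
      _ = (p + 1) * (p ! * ((p + (m + 1)) * i + j - 1)!) := by
          rw [Nat.factorial_succ, show p + 1 + m = p + (m + 1) by ring, mul_assoc]

lemma Ncoef_replicate_append {i j : ℕ} (hi : 1 ≤ i) (hj : 1 ≤ j) (m : ℕ) :
    Ncoef (List.replicate m i ++ [j]) * (m ! * i ! ^ m * (j - 1)!) = (m * i + j - 1)! := by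
  have h := Ncoef_mul_cons_replicate_append hi hj m 0
  simp only [zero_mul, Ncoef_zero_cons (by simp : List.replicate m i ++ [j] ≠ []), Nat.factorial_zero,
    one_mul, zero_add] at h
  rw [← h]
  ring

lemma Ncoef_replicate_append_eq_div {i j : ℕ} (hi : 1 ≤ i) (hj : 1 ≤ j) (m : ℕ) :
    Ncoef (List.replicate m i ++ [j]) = (m * i + j - 1)! / (m ! * i ! ^ m * (j - 1)!) :=
  (Nat.div_eq_of_eq_mul_left (by positivity) (Ncoef_replicate_append hi hj m).symm).symm

section AdChain

variable {𝔤 : Type*} [LieRing 𝔤]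

/-- `adChain X Y [i₁, …, i_ℓ] = ad_{X i_{ℓ−1}} ⋯ ad_{X i₁} (Y i_ℓ)`. -/
def adChain (X Y : ℕ → 𝔤) (l : List ℕ) : 𝔤 :=
  l.dropLast.foldl (fun v b => ⁅X b, v⁆) (Y (l.getLast?.getD 0))

lemma jetZ_eq (X Y : ℕ → 𝔤) (n : ℕ) :
    jetZ X Y n = X n + ∑ c : Composition n, Ncoef c.blocks • adChain X Y c.blocks :=
  rfl

lemma adChain_concat (X Y : ℕ → 𝔤) (l : List ℕ) (a : ℕ) :
    adChain X Y (l ++ [a]) = l.foldl (fun v b => ⁅X b, v⁆) (Y a) := by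
  simp [adChain]

lemma foldl_lie_zero (X : ℕ → 𝔤) (l : List ℕ) : l.foldl (fun v b => ⁅X b, v⁆) (0 : 𝔤) = 0 := by
  induction l with
  | nil => rfl
  | cons a l ih => rwa [List.foldl_cons, lie_zero]

lemma foldl_lie_eq_zero_of_mem (X : ℕ → 𝔤) {l : List ℕ} {b : ℕ} (hb : b ∈ l) (hX : X b = 0)
    (v : 𝔤) : l.foldl (fun v b => ⁅X b, v⁆) v = 0 := by
  induction l generalizing v with
  | nil => cases hb
  | cons a l ih =>
    rw [List.foldl_cons]
    rcases List.mem_cons.mp hb with rfl | hb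
    · rw [hX, zero_lie, foldl_lie_zero]
    · exact ih hb _

lemma foldl_lie_replicate (X : ℕ → 𝔤) (i m : ℕ) (v : 𝔤) :
    (List.replicate m i).foldl (fun v b => ⁅X b, v⁆) v = (fun w => ⁅X i, w⁆)^[m] v := by
  induction m generalizing v with
  | zero => rfl
  | succ m ih => rw [List.replicate_succ, List.foldl_cons, ih, Function.iterate_succ_apply]

lemma adChain_single_replicate_append (x : 𝔤) (Y : ℕ → 𝔤) (i j m : ℕ) :
    adChain (Pi.single i x) Y (List.replicate m i ++ [j]) = (fun v => ⁅x, v⁆)^[m] (Y j) := by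
  rw [adChain_concat, foldl_lie_replicate, Pi.single_eq_same]

lemma adChain_single_eq_zero (x y : 𝔤) {i j : ℕ} (hj : 1 ≤ j) {l : List ℕ}
    (hl : l ≠ List.replicate (l.length - 1) i ++ [j]) :
    adChain (Pi.single i x) (Pi.single j y) l = 0 := by
  rcases List.eq_nil_or_concat l with rfl | ⟨l, a, rfl⟩
  · exact Pi.single_eq_of_ne (M := fun _ => 𝔤) (show 0 ≠ j by omega) y
  rw [List.concat_eq_append] at hl ⊢
  rw [adChain_concat]
  by_cases ha : a = j
  · subst ha
    obtain ⟨b, hb, hbi⟩ : ∃ b ∈ l, b ≠ i := by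
      by_contra! hall
      have hrep : l = List.replicate l.length i := List.eq_replicate_iff.mpr ⟨rfl, hall⟩
      exact hl (by rw [List.length_append, List.length_singleton, Nat.add_sub_cancel, ← hrep])
    exact foldl_lie_eq_zero_of_mem _ hb (by simp [hbi]) _
  · rw [Pi.single_eq_of_ne ha, foldl_lie_zero]

lemma sum_Ncoef_smul_adChain_single (x y : 𝔤) {i j : ℕ} (hi : 1 ≤ i) (hj : 1 ≤ j) (n : ℕ) :
    ∑ c : Composition n, Ncoef c.blocks • adChain (Pi.single i x) (Pi.single j y) c.blocks
      = if j ≤ n ∧ (n - j) % i = 0 then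
          Ncoef (List.replicate ((n - j) / i) i ++ [j]) • (fun v => ⁅x, v⁆)^[(n - j) / i] y
        else 0 := by
  have support : ∀ c : Composition n, adChain (Pi.single i x) (Pi.single j y) c.blocks ≠ 0 →
      j ≤ n ∧ (n - j) % i = 0 ∧ c.blocks = List.replicate ((n - j) / i) i ++ [j] := by
    intro c hc
    have hb : c.blocks = List.replicate (c.blocks.length - 1) i ++ [j] := by
      by_contra h
      exact hc (adChain_single_eq_zero x y hj h)
    have hn := c.blocks_sum
    rw [hb, List.sum_append, List.sum_replicate, List.sum_singleton, smul_eq_mul] at hn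
    have hm : n - j = (c.blocks.length - 1) * i := by omega
    refine ⟨by omega, by rw [hm, Nat.mul_mod_left], ?_⟩
    rwa [hm, Nat.mul_div_cancel _ (by omega)]
  split_ifs with h
  · obtain ⟨hjn, hdvd⟩ := h
    have hn : (n - j) / i * i + j = n := by
      have := Nat.div_mul_cancel (Nat.dvd_of_mod_eq_zero hdvd)
      omega
    let c₀ : Composition n :=
      { blocks := List.replicate ((n - j) / i) i ++ [j]
        blocks_pos := fun hb => by
          rcases List.mem_append.mp hb with hb | hb
          · rw [List.eq_of_mem_replicate hb]; omega
          · rw [List.mem_singleton.mp hb]; omega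
        blocks_sum := by simpa using hn }
    rw [Fintype.sum_eq_single c₀]
    · rw [adChain_single_replicate_append, Pi.single_eq_same]
    · intro c hc
      by_contra hne
      exact hc (Composition.ext (support c (right_ne_zero_of_smul hne)).2.2)
  · refine Finset.sum_eq_zero fun c _ => ?_
    by_contra hne
    obtain ⟨hjn, hdvd, -⟩ := support c (right_ne_zero_of_smul hne)
    exact h ⟨hjn, hdvd⟩

lemma extX_single {k i : ℕ} (hi : 1 ≤ i) (hik : i ≤ k) (x : 𝔤) :
    extX k (fun l : Fin k => if l.val + 1 = i then x else 0) = Pi.single i x := by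
  funext n
  rw [extX, Pi.single_apply]
  by_cases hn : 1 ≤ n ∧ n ≤ k
  · rw [dif_pos hn, Nat.sub_add_cancel hn.1]
  · rw [dif_neg hn, if_neg (by omega)]

end AdChain

/-- A slot `n = l.val + 1` is of the form `m·i + j` iff `j ≤ n` and `i ∣ n − j`, with
`m = (n − j)/i`; then `m·i + j − 1 = l.val`. -/
theorem stmt9_general {𝔤 : Type*} [LieRing 𝔤]
    (k : ℕ) (i j : ℕ) (hi : 1 ≤ i) (hij : i < j) (hjk : j ≤ k) (x y : 𝔤) :
    jMul k (fun l : Fin k => if l.val + 1 = i then x else 0)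
           (fun l : Fin k => if l.val + 1 = j then y else 0)
      = fun l : Fin k =>
          if l.val + 1 = i then x
          else if j ≤ l.val + 1 ∧ (l.val + 1 - j) % i = 0 then
            (Nat.factorial l.val /
                (Nat.factorial ((l.val + 1 - j) / i) *
                  Nat.factorial i ^ ((l.val + 1 - j) / i) * Nat.factorial (j - 1))) •
              (fun v => ⁅x, v⁆)^[(l.val + 1 - j) / i] y
          else 0 := by
  funext l
  rw [jMul, extX_single hi (by omega) x, extX_single (by omega) hjk y, jetZ_eq,
    sum_Ncoef_smul_adChain_single x y hi (by omega), Pi.single_apply]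
  split_ifs with hli hslot hslot
  · omega
  · rw [add_zero]
  · have hm : (l.val + 1 - j) / i * i + j - 1 = l.val := by
      have := Nat.div_mul_cancel (Nat.dvd_of_mod_eq_zero hslot.2)
      omega
    rw [zero_add, Ncoef_replicate_append_eq_div hi (by omega), hm]
  · rw [add_zero]

/-- in `J_k(𝔤)`, for `1 ≤ i < j ≤ k`, the product of the pure element with
`x` in slot `i` and the pure element with `y` in slot `j` has `x` in slot `i`,
`((m·i + j − 1)! / (m!·(i!)^m·(j−1)!)) • ad_x^m y` in slot `m·i + j` for every `m ≥ 0`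
with `m·i + j ≤ k`, and `0` in every other slot.  (A slot `n = l.val + 1` is of the form
`m·i + j` iff `j ≤ n` and `i ∣ n − j`, with `m = (n − j)/i`; then `m·i + j − 1 = l.val`.) -/
theorem stmt9 {R : Type*} [CommRing R] {𝔤 : Type*} [LieRing 𝔤] [LieAlgebra R 𝔤]
    (k : ℕ) (hk : 1 ≤ k) (i j : ℕ) (hi : 1 ≤ i) (hij : i < j) (hjk : j ≤ k) (x y : 𝔤) :
    jMul k (fun l : Fin k => if l.val + 1 = i then x else 0)
           (fun l : Fin k => if l.val + 1 = j then y else 0)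
      = fun l : Fin k =>
          if l.val + 1 = i then x
          else if j ≤ l.val + 1 ∧ (l.val + 1 - j) % i = 0 then
            (Nat.factorial l.val /
                (Nat.factorial ((l.val + 1 - j) / i) *
                  Nat.factorial i ^ ((l.val + 1 - j) / i) * Nat.factorial (j - 1))) •
              (fun v => ⁅x, v⁆)^[(l.val + 1 - j) / i] y
          else 0 :=
  stmt9_general k i j hi hij hjk x y
end

section
/- For all positive integers i, j, n, the following identity of natural numbers holds: C(n·i + j − 1, j − 1) · ∏_{m=2}^{n} C(m·i − 1, i − 1) = (n·i + j − 1)! / (n! · (i!)^n · (j−1)!), where C denotes the binomial coefficient and the product is empty (equal to 1) when n = 1. Equivalently, N_{(i,…,i,j)} (with n copies of i followed by j) equals (n·i + j − 1)! / (n! · (i!)^n · (j−1)!). -/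
/-!
Both sides count the ways to split `n·i + j − 1` points into `n` unlabelled blocks of size `i`
and one block of size `j − 1`. Choosing the last block first gives `C(n·i+j−1, j−1)` times the
uniform Bell number `uniformBell n i = (n·i)! / (n!·(i!)^n)`, whose product formula is
`∏_{m=2}^{n} C(m·i−1, i−1)`. The recursion defining `Ncoef` peels off its last entry as the
same binomial factor, so `Ncoef` of `n` copies of `i` is again `uniformBell n i`.
-/

open Nat

theorem Ncoef_append_singleton (l : List ℕ) (j : ℕ) :
    Ncoef (l ++ [j]) = choose (l.sum + j - 1) (j - 1) * Ncoef l := by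
  induction l using Ncoef.induct with
  | case1 => simp [Ncoef]
  | case2 a => simp [Ncoef]
  | case3 a b rest ih =>
    simp only [List.cons_append, Ncoef] at ih ⊢
    rw [ih, List.sum_cons, List.sum_cons, List.sum_cons, add_assoc a b]
    exact Nat.mul_left_comm _ _ _

theorem Ncoef_replicate (n i : ℕ) : Ncoef (List.replicate n i) = uniformBell n i := by
  induction n with
  | zero => simp [Ncoef, uniformBell_zero_left]
  | succ n ih =>
    rw [List.replicate_succ', Ncoef_append_singleton, ih, List.sum_replicate, smul_eq_mul,
      uniformBell_succ_left]

theorem prod_Icc_two_choose_eq_uniformBell (n i : ℕ) :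
    ∏ m ∈ Finset.Icc 2 n, choose (m * i - 1) (i - 1) = uniformBell n i := by
  induction n with
  | zero => simp [uniformBell_zero_left]
  | succ n ih =>
    rcases Nat.eq_zero_or_pos n with rfl | hn
    · simp [uniformBell_one_left]
    · rw [Finset.prod_Icc_succ_top (by omega), ih, uniformBell_succ_left, add_one_mul, mul_comm]

theorem choose_mul_uniformBell_eq_div {i j : ℕ} (n : ℕ) (hi : i ≠ 0) (hj : j ≠ 0) :
    choose (n * i + j - 1) (j - 1) * uniformBell n i =
      (n * i + j - 1)! / (n ! * i ! ^ n * (j - 1)!) := by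
  obtain ⟨j, rfl⟩ := exists_eq_succ_of_ne_zero hj
  simp only [succ_eq_add_one, ← add_assoc, Nat.add_sub_cancel]
  refine (Nat.div_eq_of_eq_mul_left (by positivity) ?_).symm
  calc (n * i + j)!
      = choose (n * i + j) j * (n * i)! * j ! := (add_choose_mul_factorial_mul_factorial _ _).symm
    _ = choose (n * i + j) j * (uniformBell n i * i ! ^ n * n !) * j ! := by
      rw [uniformBell_mul_eq n hi]
    _ = _ := by ring

theorem stmt10_general (i j n : ℕ) (hi : 0 < i) (hj : 0 < j) :
    (Nat.choose (n * i + j - 1) (j - 1) *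
        ∏ m ∈ Finset.Icc 2 n, Nat.choose (m * i - 1) (i - 1)
      = Nat.factorial (n * i + j - 1) /
          (Nat.factorial n * Nat.factorial i ^ n * Nat.factorial (j - 1))) ∧
    Ncoef (List.replicate n i ++ [j])
      = Nat.factorial (n * i + j - 1) /
          (Nat.factorial n * Nat.factorial i ^ n * Nat.factorial (j - 1)) := by
  have key := choose_mul_uniformBell_eq_div n hi.ne' hj.ne'
  constructor
  · rwa [prod_Icc_two_choose_eq_uniformBell]
  · rwa [Ncoef_append_singleton, List.sum_replicate, smul_eq_mul, Ncoef_replicate]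

/-- for positive `i, j, n`,
`C(n·i+j−1, j−1) · ∏_{m=2}^{n} C(m·i−1, i−1) = (n·i+j−1)! / (n!·(i!)^n·(j−1)!)`;
equivalently `N_{(i,…,i,j)}` (with `n` copies of `i`) equals this quotient. -/
theorem stmt10 (i j n : ℕ) (hi : 0 < i) (hj : 0 < j) (hn : 0 < n) :
    (Nat.choose (n * i + j - 1) (j - 1) *
        ∏ m ∈ Finset.Icc 2 n, Nat.choose (m * i - 1) (i - 1)
      = Nat.factorial (n * i + j - 1) /
          (Nat.factorial n * Nat.factorial i ^ n * Nat.factorial (j - 1))) ∧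
    Ncoef (List.replicate n i ++ [j])
      = Nat.factorial (n * i + j - 1) /
          (Nat.factorial n * Nat.factorial i ^ n * Nat.factorial (j - 1)) :=
  stmt10_general i j n hi hj
end
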